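/- Let ξ ~ N(0, 1) and δ ≥ 0. Then E[((|ξ| - δ)₊)²] = 1 - 2·P(|ξ| ≤ δ) + E[min(ξ², δ²)]. -/

import Mathlib

open MeasureTheory ProbabilityTheory Real Filter Set

noncomputable def steinPhi : ℝ → ℝ := gaussianPDFReal 0 1

lemma steinPhi_eq (x : ℝ) : steinPhi x = (Real.sqrt (2 * π))⁻¹ * Real.exp (-(x ^ 2 / 2)) := by
  rw [steinPhi, gaussianPDFReal]
  norm_num [neg_div]

lemma steinPhi_nonneg (x : ℝ) : 0 ≤ steinPhi x := gaussianPDFReal_nonneg 0 1 x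

lemma steinPhi_even (x : ℝ) : steinPhi (-x) = steinPhi x := by
  rw [steinPhi_eq, steinPhi_eq, neg_sq]

lemma continuous_steinPhi : Continuous steinPhi := by
  have : steinPhi = fun x => (Real.sqrt (2 * π))⁻¹ * Real.exp (-(x ^ 2 / 2)) :=
    funext steinPhi_eq
  rw [this]; continuity

lemma hasDerivAt_steinPhi (x : ℝ) : HasDerivAt steinPhi (-x * steinPhi x) x := by
  have h1 : HasDerivAt (fun y : ℝ => -(y ^ 2 / 2)) (-x) x := by
    have := ((hasDerivAt_pow 2 x).div_const 2).neg
    exact this.congr_deriv (by simp)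
  have h2 := (h1.exp).const_mul ((Real.sqrt (2 * π))⁻¹)
  have hfun : steinPhi = fun y => (Real.sqrt (2 * π))⁻¹ * Real.exp (-(y ^ 2 / 2)) :=
    funext steinPhi_eq
  rw [hfun]
  refine h2.congr_deriv ?_
  beta_reduce
  ring

lemma hasDerivAt_id_mul_steinPhi (x : ℝ) :
    HasDerivAt (fun y => y * steinPhi y) (steinPhi x - x ^ 2 * steinPhi x) x := by
  have := (hasDerivAt_id x).mul (hasDerivAt_steinPhi x)
  exact this.congr_deriv (by simp; ring)

lemma integrable_steinPhi : Integrable steinPhi := integrable_gaussianPDFReal 0 1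

lemma integrable_id_mul_steinPhi : Integrable (fun x => x * steinPhi x) := by
  have h := (integrable_mul_exp_neg_mul_sq (by norm_num : (0:ℝ) < 1/2)).const_mul
    ((Real.sqrt (2 * π))⁻¹)
  have : (fun x => x * steinPhi x)
      = fun x => (Real.sqrt (2 * π))⁻¹ * (x * Real.exp (-(1/2) * x ^ 2)) := by
    funext x; rw [steinPhi_eq]; ring_nf
  rw [this]; exact h

lemma integrable_sq_mul_steinPhi : Integrable (fun x => x ^ 2 * steinPhi x) := by
  have h := (integrable_rpow_mul_exp_neg_mul_sq (by norm_num : (0:ℝ) < 1/2)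
    (by norm_num : (-1:ℝ) < 2)).const_mul ((Real.sqrt (2 * π))⁻¹)
  have : (fun x => x ^ 2 * steinPhi x)
      = fun x => (Real.sqrt (2 * π))⁻¹ * (x ^ (2:ℝ) * Real.exp (-(1/2) * x ^ 2)) := by
    funext x
    rw [steinPhi_eq, Real.rpow_two]
    ring_nf
  rw [this]; exact h

lemma integrable_poly_mul_steinPhi (a b c : ℝ) :
    Integrable (fun x => (a * x ^ 2 + b * x + c) * steinPhi x) := by
  have h := ((integrable_sq_mul_steinPhi.const_mul a).add
    (integrable_id_mul_steinPhi.const_mul b)).add (integrable_steinPhi.const_mul c)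
  have heq : (fun x => (a * x ^ 2 + b * x + c) * steinPhi x)
      = fun x => a * (x ^ 2 * steinPhi x) + b * (x * steinPhi x) + c * steinPhi x := by
    funext x; ring
  rw [heq]; exact h

lemma tendsto_steinPhi_atTop : Tendsto steinPhi atTop (nhds 0) := by
  have h1 : Tendsto (fun x : ℝ => -(x ^ 2 / 2)) atTop atBot := by
    apply Filter.tendsto_neg_atBot_iff.mpr
    exact (tendsto_pow_atTop two_ne_zero).atTop_div_const (by norm_num)
  have h2 := (Real.tendsto_exp_atBot.comp h1).const_mul ((Real.sqrt (2 * π))⁻¹)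
  have hfun : steinPhi = fun y => (Real.sqrt (2 * π))⁻¹ * Real.exp (-(y ^ 2 / 2)) :=
    funext steinPhi_eq
  rw [hfun]
  simpa using h2

lemma tendsto_steinPhi_atBot : Tendsto steinPhi atBot (nhds 0) := by
  have := tendsto_steinPhi_atTop.comp tendsto_neg_atBot_atTop
  apply this.congr
  intro x
  simp only [Function.comp_apply]
  exact steinPhi_even x

lemma tendsto_id_mul_steinPhi_atTop : Tendsto (fun x => x * steinPhi x) atTop (nhds 0) := by
  have hg : Tendsto (fun x : ℝ => (Real.sqrt (2 * π))⁻¹ * (x ^ 2 / 2 * Real.exp (-(x ^ 2 / 2))))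
      atTop (nhds 0) := by
    have h1 : Tendsto (fun x : ℝ => x ^ 2 / 2) atTop atTop :=
      (tendsto_pow_atTop two_ne_zero).atTop_div_const (by norm_num)
    have h2 := (tendsto_pow_mul_exp_neg_atTop_nhds_zero 1).comp h1
    have h3 := h2.const_mul ((Real.sqrt (2 * π))⁻¹)
    simpa [Function.comp] using h3
  apply squeeze_zero_norm' _ hg
  filter_upwards [eventually_ge_atTop (2:ℝ)] with x hx
  rw [Real.norm_eq_abs, steinPhi_eq, abs_mul, abs_mul]
  have h0 : (0:ℝ) < Real.sqrt (2 * π) := Real.sqrt_pos.mpr (by positivity)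
  rw [abs_of_pos (by positivity : (0:ℝ) < (Real.sqrt (2 * π))⁻¹),
    abs_of_pos (Real.exp_pos _), abs_of_pos (by linarith : (0:ℝ) < x)]
  have hxx : x ≤ x ^ 2 / 2 := by nlinarith
  have := Real.exp_pos (-(x ^ 2 / 2))
  nlinarith [mul_le_mul_of_nonneg_right hxx (le_of_lt this),
    inv_pos.mpr h0]

lemma tendsto_id_mul_steinPhi_atBot : Tendsto (fun x => x * steinPhi x) atBot (nhds 0) := by
  have := (tendsto_id_mul_steinPhi_atTop.neg).comp tendsto_neg_atBot_atTop
  simp only [Function.comp_def] at this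
  rw [neg_zero] at this
  apply this.congr
  intro x
  show -((-x) * steinPhi (-x)) = x * steinPhi x
  rw [steinPhi_even]
  ring

lemma integral_gauss (f : ℝ → ℝ) :
    ∫ x, f x ∂(gaussianReal 0 1) = ∫ x, steinPhi x * f x := by
  rw [gaussianReal_of_var_ne_zero 0 one_ne_zero]
  have h : (gaussianPDF 0 1) = fun x => ((steinPhi x).toNNReal : ENNReal) := rfl
  rw [h, integral_withDensity_eq_integral_smul (by
    exact (measurable_gaussianPDFReal 0 1).real_toNNReal) f]
  congr 1
  funext x
  rw [NNReal.smul_def, Real.coe_toNNReal _ (steinPhi_nonneg x)]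
  rfl

lemma stein_ftc_Ioi (δ : ℝ) : ∫ x in Ioi δ, (x ^ 2 - 2 * δ * x - 1) * steinPhi x
    = -(δ * steinPhi δ) := by
  have hG : ∀ x ∈ Ici δ, HasDerivAt (fun y => -(y * steinPhi y) + 2 * δ * steinPhi y)
      ((x ^ 2 - 2 * δ * x - 1) * steinPhi x) x := by
    intro x _
    have := (hasDerivAt_id_mul_steinPhi x).neg.add ((hasDerivAt_steinPhi x).const_mul (2 * δ))
    exact this.congr_deriv (by ring)
  have hint : IntegrableOn (fun x => (x ^ 2 - 2 * δ * x - 1) * steinPhi x) (Ioi δ) :=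
    ((integrable_poly_mul_steinPhi 1 (-(2*δ)) (-1)).congr
      (ae_of_all _ fun x => by ring)).integrableOn
  have hten : Tendsto (fun y => -(y * steinPhi y) + 2 * δ * steinPhi y) atTop (nhds 0) := by
    have := (tendsto_id_mul_steinPhi_atTop.neg).add (tendsto_steinPhi_atTop.const_mul (2 * δ))
    simpa using this
  have key := integral_Ioi_of_hasDerivAt_of_tendsto' hG hint hten
  beta_reduce at key
  rw [key]; ring

lemma stein_ftc_Iic (δ : ℝ) : ∫ x in Iic (-δ), (x ^ 2 + 2 * δ * x - 1) * steinPhi x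
    = -(δ * steinPhi δ) := by
  have hG : ∀ x ∈ Iic (-δ), HasDerivAt (fun y => -(y * steinPhi y) - 2 * δ * steinPhi y)
      ((x ^ 2 + 2 * δ * x - 1) * steinPhi x) x := by
    intro x _
    have := (hasDerivAt_id_mul_steinPhi x).neg.sub ((hasDerivAt_steinPhi x).const_mul (2 * δ))
    exact this.congr_deriv (by ring)
  have hint : IntegrableOn (fun x => (x ^ 2 + 2 * δ * x - 1) * steinPhi x) (Iic (-δ)) :=
    ((integrable_poly_mul_steinPhi 1 (2*δ) (-1)).congr
      (ae_of_all _ fun x => by ring)).integrableOn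
  have hten : Tendsto (fun y => -(y * steinPhi y) - 2 * δ * steinPhi y) atBot (nhds 0) := by
    have := (tendsto_id_mul_steinPhi_atBot.neg).sub (tendsto_steinPhi_atBot.const_mul (2 * δ))
    simpa using this
  have key := integral_Iic_of_hasDerivAt_of_tendsto' hG hint hten
  beta_reduce at key
  rw [key, steinPhi_even]; ring

lemma stein_ftc_Ioc (δ : ℝ) (hδ : 0 ≤ δ) :
    ∫ x in Ioc (-δ) δ, (x ^ 2 - 1) * steinPhi x = -(2 * δ * steinPhi δ) := by
  rw [← intervalIntegral.integral_of_le (by linarith : -δ ≤ δ)]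
  have key := intervalIntegral.integral_eq_sub_of_hasDerivAt
    (f := fun y => -(y * steinPhi y)) (f' := fun x => (x ^ 2 - 1) * steinPhi x)
    (a := -δ) (b := δ)
    (fun x _ => by
      have := (hasDerivAt_id_mul_steinPhi x).neg
      exact this.congr_deriv (by ring))
    (by
      have hii : Integrable (fun x => (x ^ 2 - 1) * steinPhi x) :=
        (integrable_poly_mul_steinPhi 1 0 (-1)).congr (ae_of_all _ fun x => by ring)
      exact hii.intervalIntegrable)
  beta_reduce at key
  rw [key, steinPhi_even]; ring

/-- Stein's unbiased risk identity for soft thresholding at zero mean: if `ξ ~ N(0,1)`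
and `δ ≥ 0`, then `E[((|ξ| - δ)₊)²] = 1 - 2 P(|ξ| ≤ δ) + E[min(ξ², δ²)]`. -/
theorem stein_soft_threshold_identity (δ : ℝ) (hδ : 0 ≤ δ) :
    ∫ x, max (|x| - δ) 0 ^ 2 ∂(gaussianReal 0 1) =
      1 - 2 * ((gaussianReal 0 1) {x | |x| ≤ δ}).toReal +
        ∫ x, min (x ^ 2) (δ ^ 2) ∂(gaussianReal 0 1) := by
  rw [integral_gauss, integral_gauss]
  -- the measure of the central interval
  have hmeas : ((gaussianReal 0 1) {x | |x| ≤ δ}).toReal = ∫ x in Ioc (-δ) δ, steinPhi x := by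
    have hset : {x : ℝ | |x| ≤ δ} = Icc (-δ) δ := by ext x; simp [abs_le]
    rw [hset, gaussianReal_apply_eq_integral 0 one_ne_zero,
      show gaussianPDFReal 0 1 = steinPhi from rfl,
      ENNReal.toReal_ofReal (setIntegral_nonneg measurableSet_Icc
        fun x _ => steinPhi_nonneg x), integral_Icc_eq_integral_Ioc]
  rw [hmeas]
  -- global integrability of both integrands
  have hMle : ∀ x : ℝ, max (|x| - δ) 0 ^ 2 ≤ x ^ 2 := by
    intro x
    have h1 : max (|x| - δ) 0 ≤ |x| := max_le (by linarith [abs_nonneg x]) (abs_nonneg x)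
    calc max (|x| - δ) 0 ^ 2 ≤ |x| ^ 2 := pow_le_pow_left₀ (le_max_right _ _) h1 2
    _ = x ^ 2 := sq_abs x
  have intM : Integrable (fun x => steinPhi x * max (|x| - δ) 0 ^ 2) := by
    apply Integrable.mono' integrable_sq_mul_steinPhi
    · exact (continuous_steinPhi.mul
        (((continuous_abs.sub continuous_const).max continuous_const).pow 2)).aestronglyMeasurable
    · refine ae_of_all _ fun x => ?_
      rw [Real.norm_eq_abs, abs_mul, abs_of_nonneg (steinPhi_nonneg x),
        abs_of_nonneg (by positivity)]
      nlinarith [steinPhi_nonneg x, hMle x, sq_nonneg (max (|x| - δ) 0)]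
  have intm : Integrable (fun x => steinPhi x * min (x ^ 2) (δ ^ 2)) := by
    apply Integrable.mono' integrable_sq_mul_steinPhi
    · exact (continuous_steinPhi.mul
        ((continuous_pow 2).min continuous_const)).aestronglyMeasurable
    · refine ae_of_all _ fun x => ?_
      rw [Real.norm_eq_abs, abs_mul, abs_of_nonneg (steinPhi_nonneg x),
        abs_of_nonneg (le_min (sq_nonneg x) (sq_nonneg δ))]
      nlinarith [steinPhi_nonneg x, min_le_left (x ^ 2) (δ ^ 2),
        le_min (sq_nonneg x) (sq_nonneg δ)]
  -- splitting the line at ±δ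
  have splitf : ∀ f : ℝ → ℝ, Integrable f →
      ∫ x, f x = (∫ x in Iic (-δ), f x) + (∫ x in Ioc (-δ) δ, f x) + (∫ x in Ioi δ, f x) := by
    intro f hf
    have h1 := intervalIntegral.integral_Iic_add_Ioi (μ := volume) (b := δ) hf.integrableOn hf.integrableOn
    have h2 := setIntegral_union (μ := volume) (f := f) (t := Ioc (-δ) δ)
      (Iic_disjoint_Ioc (le_refl (-δ))) measurableSet_Ioc hf.integrableOn hf.integrableOn
    rw [Iic_union_Ioc_eq_Iic (by linarith : -δ ≤ δ)] at h2
    linarith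
  have hsplitM := splitf _ intM
  have hsplitm := splitf _ intm
  have hsplit1 := splitf _ integrable_steinPhi
  have h1 : ∫ x, steinPhi x = 1 := integral_gaussianPDFReal_eq_one 0 one_ne_zero
  -- region values for M
  have hM0 : ∫ x in Ioc (-δ) δ, steinPhi x * max (|x| - δ) 0 ^ 2 = 0 := by
    rw [setIntegral_congr_fun measurableSet_Ioc (g := fun _ => (0:ℝ)) ?_, integral_zero]
    intro x hx
    have h1 : |x| ≤ δ := abs_le.mpr ⟨le_of_lt hx.1, hx.2⟩
    simp only
    rw [max_eq_right (by linarith)]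
    ring
  have hMp : ∫ x in Ioi δ, steinPhi x * max (|x| - δ) 0 ^ 2
      = -(δ * steinPhi δ) + (1 + δ ^ 2) * ∫ x in Ioi δ, steinPhi x := by
    rw [setIntegral_congr_fun measurableSet_Ioi
      (g := fun x => (x ^ 2 - 2 * δ * x - 1) * steinPhi x + (1 + δ ^ 2) * steinPhi x) ?_]
    · rw [integral_add
        (((integrable_poly_mul_steinPhi 1 (-(2*δ)) (-1)).congr
          (ae_of_all _ fun x => by ring)).integrableOn)
        ((integrable_steinPhi.const_mul (1 + δ ^ 2)).integrableOn),
        stein_ftc_Ioi δ, integral_const_mul]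
    · intro x hx
      have hx' : δ < x := hx
      have habs : |x| = x := abs_of_pos (lt_of_le_of_lt hδ hx')
      simp only
      rw [habs, max_eq_left (by linarith)]
      ring
  have hMm : ∫ x in Iic (-δ), steinPhi x * max (|x| - δ) 0 ^ 2
      = -(δ * steinPhi δ) + (1 + δ ^ 2) * ∫ x in Iic (-δ), steinPhi x := by
    rw [setIntegral_congr_fun measurableSet_Iic
      (g := fun x => (x ^ 2 + 2 * δ * x - 1) * steinPhi x + (1 + δ ^ 2) * steinPhi x) ?_]
    · rw [integral_add
        (((integrable_poly_mul_steinPhi 1 (2*δ) (-1)).congr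
          (ae_of_all _ fun x => by ring)).integrableOn)
        ((integrable_steinPhi.const_mul (1 + δ ^ 2)).integrableOn),
        stein_ftc_Iic δ, integral_const_mul]
    · intro x hx
      have hx' : x ≤ -δ := hx
      have habs : |x| = -x := abs_of_nonpos (by linarith)
      simp only
      rw [habs, max_eq_left (by linarith)]
      ring
  -- region values for m
  have hm0 : ∫ x in Ioc (-δ) δ, steinPhi x * min (x ^ 2) (δ ^ 2)
      = -(2 * δ * steinPhi δ) + ∫ x in Ioc (-δ) δ, steinPhi x := by
    rw [setIntegral_congr_fun measurableSet_Ioc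
      (g := fun x => (x ^ 2 - 1) * steinPhi x + steinPhi x) ?_]
    · rw [integral_add
        (((integrable_poly_mul_steinPhi 1 0 (-1)).congr
          (ae_of_all _ fun x => by ring)).integrableOn)
        (integrable_steinPhi.integrableOn), stein_ftc_Ioc δ hδ]
    · intro x hx
      have hx2 : x ^ 2 ≤ δ ^ 2 := by nlinarith [hx.1, hx.2]
      simp only
      rw [min_eq_left hx2]
      ring
  have hmp : ∫ x in Ioi δ, steinPhi x * min (x ^ 2) (δ ^ 2)
      = δ ^ 2 * ∫ x in Ioi δ, steinPhi x := by
    rw [setIntegral_congr_fun measurableSet_Ioi (g := fun x => δ ^ 2 * steinPhi x) ?_,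
      integral_const_mul]
    intro x hx
    have hx' : δ < x := hx
    have hx2 : δ ^ 2 ≤ x ^ 2 := by nlinarith
    simp only
    rw [min_eq_right hx2]
    ring
  have hmm : ∫ x in Iic (-δ), steinPhi x * min (x ^ 2) (δ ^ 2)
      = δ ^ 2 * ∫ x in Iic (-δ), steinPhi x := by
    rw [setIntegral_congr_fun measurableSet_Iic (g := fun x => δ ^ 2 * steinPhi x) ?_,
      integral_const_mul]
    intro x hx
    have hx' : x ≤ -δ := hx
    have hx2 : δ ^ 2 ≤ x ^ 2 := by nlinarith
    simp only
    rw [min_eq_right hx2]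
    ring
  nlinarith [hsplitM, hsplitm, hsplit1, h1, hM0, hMp, hMm, hm0, hmp, hmm,
    sq_nonneg δ]
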